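/- arXiv:math/0504355 — 6 statements merged into one kernel-verified Lean document; each statement's English description precedes it below -/
import Mathlib

section
/- Let n ≥ 1 and x ≥ 0 be integers, and set y = 2^(n+2) * x + 2^(n+1) - 1. Then for each j with 1 ≤ j ≤ n, the j-th iterate of T applied to y equals 2^(n+2-j) * (3^j * x + (3^j - 1)/2) + 2^(n+1-j) - 1. In particular y < T(y) < T^2(y) < ... < T^n(y). -/
/-!
Since `y + 1 = 2 ^ (n + 1) * (2 * x + 1)`, everything follows from one step: for `k ≥ 1` and `c ≥ 1`,
`3 * (2 ^ (k + 1) * c - 1) + 1 = 2 * (3 * 2 ^ k * c - 1)` with the second factor odd, so `T` sends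
`2 ^ (k + 1) * c - 1` to `2 ^ k * (3 * c) - 1`. Each application of `T` thus trades a factor `2` of
`y + 1` for a factor `3`, as long as a factor `4` remains.
-/

def T (m : ℕ) : ℕ := (3 * m + 1) / 2 ^ (padicValNat 2 (3 * m + 1))

lemma T_eq_of_three_mul_add_one_eq {m o : ℕ} (ho : Odd o) (hm : 3 * m + 1 = 2 * o) : T m = o := by
  have hval : padicValNat 2 (3 * m + 1) = 1 := by
    rw [hm, padicValNat.mul two_ne_zero ho.pos.ne', padicValNat.self one_lt_two,
      padicValNat.eq_zero_of_not_dvd (Nat.two_dvd_ne_zero.mpr (Nat.odd_iff.mp ho))]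
  rw [T, hval, hm, pow_one, Nat.mul_div_cancel_left _ two_pos]

lemma T_two_pow_mul_sub_one {k c : ℕ} (hk : 1 ≤ k) (hc : 1 ≤ c) :
    T (2 ^ (k + 1) * c - 1) = 2 ^ k * (3 * c) - 1 := by
  obtain ⟨p, hp⟩ : 2 ∣ 2 ^ k := dvd_pow_self 2 (by omega)
  have hp' : 2 ^ (k + 1) = 2 * (2 * p) := by rw [pow_succ, hp, mul_comm]
  have hp0 : 1 ≤ p := by have := Nat.one_le_two_pow (n := k); omega
  have hpc : 1 ≤ p * c := Nat.mul_le_mul hp0 hc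
  apply T_eq_of_three_mul_add_one_eq
  · rw [hp, Nat.odd_iff]
    have : 2 * p * (3 * c) = 2 * (3 * (p * c)) := by ring
    omega
  · rw [hp, hp']
    have : 2 * (2 * p) * c = 4 * (p * c) := by ring
    have : 2 * p * (3 * c) = 6 * (p * c) := by ring
    omega

lemma lt_T_two_pow_mul_sub_one {k c : ℕ} (hk : 1 ≤ k) (hc : 1 ≤ c) :
    2 ^ (k + 1) * c - 1 < T (2 ^ (k + 1) * c - 1) := by
  rw [T_two_pow_mul_sub_one hk hc]
  have : 2 ^ (k + 1) * c = 2 * (2 ^ k * c) := by ring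
  have : 2 ^ k * (3 * c) = 3 * (2 ^ k * c) := by ring
  have : 1 ≤ 2 ^ k * c := Nat.mul_le_mul Nat.one_le_two_pow hc
  omega

lemma T_iterate_two_pow_mul_sub_one {k : ℕ} (hk : 1 ≤ k) (j : ℕ) {c : ℕ} (hc : 1 ≤ c) :
    T^[j] (2 ^ (k + j) * c - 1) = 2 ^ k * (3 ^ j * c) - 1 := by
  induction j generalizing c with
  | zero => simp
  | succ j ih =>
    rw [Function.iterate_succ_apply, ← add_assoc, T_two_pow_mul_sub_one (by omega) hc,
      ih (by omega), pow_succ, mul_assoc]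

lemma two_pow_mul_three_pow_mul_odd_sub_one {m j : ℕ} (x : ℕ) :
    2 ^ (m + 1) * (3 ^ j * x + (3 ^ j - 1) / 2) + 2 ^ m - 1 = 2 ^ m * (3 ^ j * (2 * x + 1)) - 1 := by
  have hhalf : 2 * ((3 ^ j - 1) / 2) = 3 ^ j - 1 :=
    Nat.two_mul_div_two_of_even (Nat.Odd.sub_odd (Odd.pow (by decide)) odd_one)
  have hpos : 1 ≤ 3 ^ j := Nat.one_le_pow _ _ (by norm_num)
  have : 2 * (3 ^ j * x + (3 ^ j - 1) / 2) + 1 = 3 ^ j * (2 * x + 1) := by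
    have : 3 ^ j * (2 * x + 1) = 2 * (3 ^ j * x) + 3 ^ j := by ring
    omega
  rw [← this]
  congr 1
  ring

theorem stmt_4_general (n x : ℕ) (y : ℕ) (hy : y = 2 ^ (n + 2) * x + 2 ^ (n + 1) - 1) :
    (∀ j, 1 ≤ j → j ≤ n →
      T^[j] y = 2 ^ (n + 2 - j) * (3 ^ j * x + (3 ^ j - 1) / 2) + 2 ^ (n + 1 - j) - 1) ∧
    (∀ j, j < n → T^[j] y < T^[j + 1] y) := by
  have hy' : y = 2 ^ (n + 1) * (2 * x + 1) - 1 := by rw [hy, pow_succ 2 (n + 1)]; ring_nf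
  have closed : ∀ j ≤ n, T^[j] y = 2 ^ (n - j + 1) * (3 ^ j * (2 * x + 1)) - 1 := by
    intro j hj
    rw [hy', show n + 1 = n - j + 1 + j by omega]
    exact T_iterate_two_pow_mul_sub_one (by omega) j (by omega)
  refine ⟨fun j _ hj => ?_, fun j hj => ?_⟩
  · rw [closed j hj, show n + 2 - j = n + 1 - j + 1 by omega,
      two_pow_mul_three_pow_mul_odd_sub_one, show n + 1 - j = n - j + 1 by omega]
  · rw [Function.iterate_succ_apply', closed j hj.le]
    exact lt_T_two_pow_mul_sub_one (by omega) (Nat.one_le_iff_ne_zero.mpr (by positivity))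

theorem stmt_4 (n x : ℕ) (hn : 1 ≤ n) (y : ℕ) (hy : y = 2 ^ (n + 2) * x + 2 ^ (n + 1) - 1) :
    (∀ j, 1 ≤ j → j ≤ n →
      T^[j] y = 2 ^ (n + 2 - j) * (3 ^ j * x + (3 ^ j - 1) / 2) + 2 ^ (n + 1 - j) - 1) ∧
    (∀ j, j < n → T^[j] y < T^[j + 1] y) :=
  stmt_4_general n x y hy
end

section
/- Let n ≥ 1 and x ≥ 0 with y = 2^(n+2) * x + 2^(n+1) - 1. Then T^(n+1)(y) < T^n(y). -/
theorem T_eq_of_three_mul_add_one_eq_s6 {m k r : ℕ} (hr : Odd r) (h : 3 * m + 1 = 2 ^ k * r) :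
    T m = r := by
  have hval : padicValNat 2 (3 * m + 1) = k := by
    rw [h, padicValNat.mul (by positivity) hr.pos.ne', padicValNat.prime_pow,
      padicValNat.eq_zero_of_not_dvd hr.not_two_dvd_nat, add_zero]
  rw [T, hval, h, Nat.mul_div_cancel_left _ (by positivity)]

theorem T_le_of_four_dvd {m : ℕ} (h : 4 ∣ 3 * m + 1) : T m ≤ (3 * m + 1) / 4 := by
  have hval : 2 ≤ padicValNat 2 (3 * m + 1) :=
    (padicValNat_dvd_iff_le (by omega)).mp (by simpa using h)
  exact Nat.div_le_div_left (by simpa using Nat.pow_le_pow_right two_pos hval) (by norm_num)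

theorem T_lt_self_of_four_dvd {m : ℕ} (h : 4 ∣ 3 * m + 1) (hm : 1 < m) : T m < m := by
  have := T_le_of_four_dvd h
  omega

theorem T_two_pow_succ_mul_sub_one {k c : ℕ} (hk : 1 ≤ k) (hc : 0 < c) :
    T (2 ^ (k + 1) * c - 1) = 2 ^ k * (3 * c) - 1 := by
  have hpos : 2 ≤ 2 ^ k * (3 * c) :=
    le_trans (by simpa using Nat.pow_le_pow_right two_pos hk)
      (Nat.le_mul_of_pos_right _ (by omega))
  have heven : Even (2 ^ k * (3 * c)) := (Nat.even_pow.mpr ⟨even_two, by omega⟩).mul_right _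
  apply T_eq_of_three_mul_add_one_eq_s6 (k := 1) (Nat.Even.sub_odd (by omega) heven odd_one)
  have hpow : 2 ^ (k + 1) * c = 2 * (2 ^ k * c) := by ring
  have hmul : 2 ^ k * (3 * c) = 3 * (2 ^ k * c) := by ring
  rw [hpow, hmul]
  omega

theorem iterate_T_two_pow_mul_sub_one (j k : ℕ) {c : ℕ} (hc : 0 < c) :
    T^[j] (2 ^ (j + k + 1) * c - 1) = 2 ^ (k + 1) * (3 ^ j * c) - 1 := by
  induction j generalizing c with
  | zero => simp
  | succ j ih =>
    rw [Function.iterate_succ_apply, show j + 1 + k + 1 = (j + k + 1) + 1 by ring,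
      T_two_pow_succ_mul_sub_one (by omega) hc, ih (by omega), pow_succ']
    ring_nf

theorem stmt_6 (n x : ℕ) (hn : 1 ≤ n) (y : ℕ) (hy : y = 2 ^ (n + 2) * x + 2 ^ (n + 1) - 1) :
    T^[n + 1] y < T^[n] y := by
  set M := 3 ^ n * (2 * x + 1)
  have hy' : y = 2 ^ (n + 0 + 1) * (2 * x + 1) - 1 := by rw [hy]; ring_nf
  have hTn : T^[n] y = 2 * M - 1 := by
    simpa [hy'] using iterate_T_two_pow_mul_sub_one n 0 (c := 2 * x + 1) (by omega)
  have hM_odd : Odd M := (Odd.pow (by decide)).mul (odd_two_mul_add_one x)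
  have hM_ge : 3 ≤ M := le_trans (by simpa using Nat.pow_le_pow_right (by norm_num) hn)
    (Nat.le_mul_of_pos_right (3 ^ n) (by omega))
  obtain ⟨t, ht⟩ := hM_odd
  rw [Function.iterate_succ_apply', hTn]
  exact T_lt_self_of_four_dvd ⟨3 * t + 1, by omega⟩ (by omega)
end

section
/- For every positive integer n there exists an odd positive integer y such that the trajectory under T strictly increases for n consecutive steps: y < T(y) < T^2(y) < ... < T^n(y). -/
theorem T_eq_of_three_mul_add_one_eq_s7 {m a b : ℕ} (h : 3 * m + 1 = 2 ^ a * b) (hb : Odd b) :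
    T m = b := by
  have hb0 : b ≠ 0 := hb.pos.ne'
  have hval : padicValNat 2 (2 ^ a * b) = a := by
    rw [padicValNat.mul (by positivity) hb0, padicValNat.prime_pow,
      padicValNat.eq_zero_of_not_dvd (Nat.two_dvd_ne_zero.mpr (Nat.odd_iff.mp hb)),
      add_zero]
  rw [T, h, hval, Nat.mul_div_cancel_left _ (by positivity)]

theorem T_two_mul_sub_one {m : ℕ} (hm : Even m) (hm0 : 0 < m) : T (2 * m - 1) = 3 * m - 1 := by
  obtain ⟨r, rfl⟩ := hm
  refine T_eq_of_three_mul_add_one_eq_s7 (a := 1) ?_ ⟨3 * r - 1, by omega⟩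
  omega

theorem iterate_T_two_pow_mul_sub_one_s7 (j : ℕ) {m : ℕ} (hm : Even m) (hm0 : 0 < m) :
    T^[j] (2 ^ j * m - 1) = 3 ^ j * m - 1 := by
  induction j generalizing m with
  | zero => simp
  | succ j ih =>
    have hstep : T (2 ^ (j + 1) * m - 1) = 2 ^ j * (3 * m) - 1 := by
      rw [pow_succ', mul_assoc, T_two_mul_sub_one (hm.mul_left _) (by positivity)]
      ring_nf
    rw [Function.iterate_succ_apply, hstep, ih (hm.mul_left 3) (by positivity), pow_succ]
    ring_nf

theorem stmt_7_general (n : ℕ) :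
    ∃ y : ℕ, Odd y ∧ 0 < y ∧ ∀ j, j < n → T^[j] y < T^[j + 1] y := by
  refine ⟨2 ^ (n + 1) - 1, ⟨2 ^ n - 1, ?_⟩, ?_, fun j hj => ?_⟩
  · have := Nat.one_le_two_pow (n := n)
    rw [pow_succ]
    omega
  · have := Nat.one_lt_two_pow (n := n + 1) (by omega)
    omega
  obtain ⟨k, rfl⟩ := Nat.exists_eq_add_of_lt hj
  set m := 3 ^ j * 2 ^ (k + 1) with hm
  have hm0 : 0 < m := by positivity
  have horbit : T^[j] (2 ^ (j + k + 1 + 1) - 1) = 2 * m - 1 := by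
    rw [show j + k + 1 + 1 = j + (k + 2) by ring, pow_add,
      iterate_T_two_pow_mul_sub_one_s7 j (by simp [Nat.even_pow]) (by positivity), hm]
    ring_nf
  rw [Function.iterate_succ_apply', horbit,
    T_two_mul_sub_one (by simp [hm, Nat.even_pow]) hm0]
  omega

theorem stmt_7 (n : ℕ) (hn : 1 ≤ n) :
    ∃ y : ℕ, Odd y ∧ 0 < y ∧ ∀ j, j < n → T^[j] y < T^[j + 1] y :=
  stmt_7_general n
end

section
/- For every odd positive integer y and every n ≥ 1, letting z = 4^n * y + (4^n - 1)/3, we have T(z) = T(y). -/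
lemma two_pow_mul_div_two_pow_padicValNat (k a : ℕ) :
    2 ^ k * a / 2 ^ padicValNat 2 (2 ^ k * a) = a / 2 ^ padicValNat 2 a := by
  rcases eq_or_ne a 0 with rfl | ha
  · simp
  rw [padicValNat.mul (by positivity) ha, padicValNat.prime_pow, pow_add,
    Nat.mul_div_mul_left _ _ (by positivity)]

lemma three_dvd_four_pow_sub_one (k : ℕ) : 3 ∣ 4 ^ k - 1 := by
  simpa using Nat.sub_dvd_pow_sub_pow 4 1 k

lemma three_mul_four_pow_mul_add_add_one (m k : ℕ) :
    3 * (4 ^ k * m + (4 ^ k - 1) / 3) + 1 = 2 ^ (2 * k) * (3 * m + 1) := by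
  have hdiv := Nat.mul_div_cancel' (three_dvd_four_pow_sub_one k)
  have hpos : 1 ≤ 4 ^ k := Nat.one_le_pow _ _ (by norm_num)
  rw [pow_mul, show (2 : ℕ) ^ 2 = 4 by norm_num, Nat.mul_add, hdiv]
  zify [hpos]
  ring

theorem stmt_9_general (y n : ℕ) :
    T (4 ^ n * y + (4 ^ n - 1) / 3) = T y := by
  unfold T
  rw [three_mul_four_pow_mul_add_add_one, two_pow_mul_div_two_pow_padicValNat]

theorem stmt_9 (y n : ℕ) (hy : Odd y) (hy0 : 0 < y) (hn : 1 ≤ n) :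
    T (4 ^ n * y + (4 ^ n - 1) / 3) = T y :=
  stmt_9_general y n
end

section
/- If the trajectory of an odd positive integer y under T eventually reaches 1, then for every n ≥ 1 the trajectory of z = 4^n * y + (4^n - 1)/3 under T also eventually reaches 1. -/
lemma T_eq_of_three_mul_add_one_eq_two_pow_mul {a b j : ℕ}
    (h : 3 * a + 1 = 2 ^ j * (3 * b + 1)) : T a = T b := by
  have hval : padicValNat 2 (3 * a + 1) = j + padicValNat 2 (3 * b + 1) := by
    rw [h, padicValNat.mul (by positivity) (by omega), padicValNat.prime_pow]
  rw [T, T, hval, h, pow_add, Nat.mul_div_mul_left _ _ (by positivity)]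

lemma T_one : T 1 = 1 := by
  rw [T_eq_of_three_mul_add_one_eq_two_pow_mul (a := 1) (b := 0) (j := 2) rfl]
  simp [T]

lemma three_mul_add_one_four_pow_mul_add (n y : ℕ) :
    3 * (4 ^ n * y + (4 ^ n - 1) / 3) + 1 = 2 ^ (2 * n) * (3 * y + 1) := by
  have hdvd : 3 ∣ 4 ^ n - 1 := by simpa using Nat.sub_dvd_pow_sub_pow 4 1 n
  have hpos : 1 ≤ 4 ^ n := Nat.one_le_pow _ _ (by norm_num)
  rw [mul_add, Nat.mul_div_cancel' hdvd, pow_mul]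
  zify [hpos]
  ring

theorem stmt_11_general (y n : ℕ)
    (h : ∃ k, T^[k] y = 1) :
    ∃ k, T^[k] (4 ^ n * y + (4 ^ n - 1) / 3) = 1 := by
  obtain ⟨k, hk⟩ := h
  have hTz : T (4 ^ n * y + (4 ^ n - 1) / 3) = T y :=
    T_eq_of_three_mul_add_one_eq_two_pow_mul (three_mul_add_one_four_pow_mul_add n y)
  refine ⟨k + 1, ?_⟩
  rw [Function.iterate_succ_apply, hTz, ← Function.iterate_succ_apply,
    Function.iterate_succ_apply', hk, T_one]

theorem stmt_11 (y n : ℕ) (hy : Odd y) (hy0 : 0 < y) (hn : 1 ≤ n)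
    (h : ∃ k, T^[k] y = 1) :
    ∃ k, T^[k] (4 ^ n * y + (4 ^ n - 1) / 3) = 1 :=
  stmt_11_general y n h
end

section
/- Suppose x is an odd positive integer such that 3^(k+1) * x = 2^(n_{k+1}) - (3^k * 2^0 + 3^(k-1) * 2^(n_1) + ... + 3^0 * 2^(n_k)) for some strictly increasing sequence 0 < n_1 < n_2 < ... < n_{k+1} of positive integers. Then the trajectory of x under the accelerated map T reaches 1 (in at most k+1 steps). -/
/-!
Multiplying the representation by `2 ^ n₀` makes it homogeneous in the sequence `n`:
`3 ^ (k + 1) * x * 2 ^ n₀ + ∑ 3 ^ (k - j) * 2 ^ nⱼ = 2 ^ n_{k+1}`.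
Splitting off the term `j = 0` gives `3 ^ k * 2 ^ n₀ * (3x + 1) + ∑_{j ≥ 1} … = 2 ^ n_{k+1}`,
and comparing 2-adic valuations shows `2 ^ n₀ * (3x + 1) = 2 ^ n₁ * q` with `q` odd, so `T x = q`
and `q` has a representation of the same shape with one term fewer.
-/

open Finset

theorem T_eq_of_two_pow_mul_eq {m a b q : ℕ} (hab : a ≤ b) (hq : Odd q)
    (h : 2 ^ a * (3 * m + 1) = 2 ^ b * q) : T m = q := by
  have h' : 3 * m + 1 = 2 ^ (b - a) * q := by
    apply Nat.eq_of_mul_eq_mul_left (pow_pos two_pos a)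
    rw [h, ← mul_assoc, ← pow_add, Nat.add_sub_cancel' hab]
  have hq0 : q ≠ 0 := hq.pos.ne'
  have hv : padicValNat 2 (3 * m + 1) = b - a := by
    rw [h', padicValNat.mul (by positivity) hq0, padicValNat.prime_pow,
      padicValNat.eq_zero_of_not_dvd (Nat.two_dvd_ne_zero.mpr (Nat.odd_iff.mp hq)), add_zero]
  rw [T, hv, h', Nat.mul_div_cancel_left _ (by positivity)]

theorem exists_odd_eq_two_pow_mul_of_add_eq {a b e A R c : ℕ} (ha : Odd a) (hb : Odd b)
    (hR : 2 ^ (e + 1) ∣ R) (hc : 2 ^ (e + 1) ∣ c) (h : a * A + (b * 2 ^ e + R) = c) :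
    ∃ q, Odd q ∧ A = 2 ^ e * q := by
  have hsucc : 2 ^ e ∣ 2 ^ (e + 1) := pow_dvd_pow 2 e.le_succ
  have hbR : 2 ^ e ∣ b * 2 ^ e + R := dvd_add (dvd_mul_left _ _) (hsucc.trans hR)
  have haA : 2 ^ e ∣ a * A := (Nat.dvd_add_left hbR).mp (h ▸ hsucc.trans hc)
  obtain ⟨q, rfl⟩ :=
    (Nat.Coprime.pow_left e (Nat.coprime_two_left.mpr ha)).dvd_of_dvd_mul_left haA
  obtain ⟨r, rfl⟩ := hR
  obtain ⟨s, rfl⟩ := hc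
  have hparity : a * q + b + 2 * r = 2 * s := by
    apply Nat.eq_of_mul_eq_mul_left (pow_pos two_pos e)
    rw [pow_succ] at h
    linarith
  have hodd : Odd (a * q) := by
    rw [Nat.odd_iff] at hb ⊢
    omega
  exact ⟨q, (Nat.odd_mul.mp hodd).2, rfl⟩

theorem iterate_T_eq_one_of_rep (k : ℕ) {x : ℕ} {n : ℕ → ℕ}
    (hn : StrictMonoOn n (Set.Iic (k + 1)))
    (h : 3 ^ (k + 1) * x * 2 ^ n 0 + ∑ j ∈ range (k + 1), 3 ^ (k - j) * 2 ^ n j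
      = 2 ^ n (k + 1)) :
    T^[k + 1] x = 1 := by
  induction k generalizing x n with
  | zero =>
    have hn01 : n 0 < n 1 := hn (by simp) (by simp) zero_lt_one
    refine T_eq_of_two_pow_mul_eq hn01.le odd_one ?_
    simp only [zero_add, pow_one, range_one, sum_singleton, Nat.sub_zero, pow_zero] at h
    linarith
  | succ k ih =>
    have hshift : StrictMonoOn (fun j => n (j + 1)) (Set.Iic (k + 1)) :=
      fun i hi j hj hij => hn (by simp_all) (by simp_all) (by omega)
    have hn1 : ∀ j ∈ Set.Iic (k + 2), 1 < j → n 1 + 1 ≤ n j :=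
      fun j hj h1j => hn (by simp) hj h1j
    have hstep : 3 ^ (k + 1) * (2 ^ n 0 * (3 * x + 1))
        + ∑ j ∈ range (k + 1), 3 ^ (k - j) * 2 ^ n (j + 1) = 2 ^ n (k + 2) := by
      rw [← h, sum_range_succ' _ (k + 1)]
      simp only [Nat.add_sub_add_right, Nat.sub_zero]
      ring
    have hsplit : 3 ^ (k + 1) * (2 ^ n 0 * (3 * x + 1))
        + (3 ^ k * 2 ^ n 1 + ∑ j ∈ range k, 3 ^ (k - 1 - j) * 2 ^ n (j + 2)) = 2 ^ n (k + 2) := by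
      rw [← hstep, sum_range_succ']
      simp only [Nat.sub_zero, Nat.sub_sub, add_comm 1]
      ring
    obtain ⟨q, hq, hQ⟩ := exists_odd_eq_two_pow_mul_of_add_eq
      (Odd.pow (by decide)) (Odd.pow (by decide))
      (dvd_sum fun j hj => dvd_mul_of_dvd_right
        (pow_dvd_pow 2 (hn1 (j + 2) (by simp at hj ⊢; omega) (by omega))) _)
      (pow_dvd_pow 2 (hn1 (k + 2) (by simp) (by omega))) hsplit
    have hTx : T x = q :=
      T_eq_of_two_pow_mul_eq (hn (by simp) (by simp) zero_lt_one).le hq hQ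
    rw [Function.iterate_succ_apply, hTx]
    exact ih hshift (by rw [← hstep, hQ]; ring)

theorem stmt_14_general (x k : ℕ) (n : ℕ → ℕ)
    (hn0 : n 0 = 0)
    (hmono : ∀ i j, i < j → j ≤ k + 1 → n i < n j)
    (hrep : 3 ^ (k + 1) * x + (Finset.range (k + 1)).sum (fun j => 3 ^ (k - j) * 2 ^ (n j))
      = 2 ^ (n (k + 1))) :
    ∃ m, m ≤ k + 1 ∧ T^[m] x = 1 :=
  ⟨k + 1, le_rfl, iterate_T_eq_one_of_rep k (fun _ _ _ hj hij => hmono _ _ hij hj)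
    (by rwa [hn0, pow_zero, mul_one])⟩

theorem stmt_14 (x k : ℕ) (hx : Odd x) (hx0 : 0 < x) (n : ℕ → ℕ)
    (hn0 : n 0 = 0)
    (hmono : ∀ i j, i < j → j ≤ k + 1 → n i < n j)
    (hrep : 3 ^ (k + 1) * x + (Finset.range (k + 1)).sum (fun j => 3 ^ (k - j) * 2 ^ (n j))
      = 2 ^ (n (k + 1))) :
    ∃ m, m ≤ k + 1 ∧ T^[m] x = 1 :=
  stmt_14_general x k n hn0 hmono hrep
end
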